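/- arXiv:1807.08527 — 6 statements merged into one kernel-verified Lean document; each statement's English description precedes it below -/
import Mathlib

section
/- The improper integral ∫₀¹ (−x·cot(πx) − 1/(π(1−x))) dx converges and equals −ln(2π)/π. -/
/-!
Since `(x log sin πx)' = log sin πx + πx cot πx`, the function
`G x = (x log sin πx - log (1 - x) - ∫₀ˣ log sin πu du) / π` is a primitive of `-g` on `(0, 1)`.
The integrand `-g` is nonnegative (because `t cot t ≤ 1` on `(0, π)`), so it is integrable
as soon as `G` has finite one-sided limits at the endpoints. These limits are `0` at `0` and
`(log π + log 2) / π` at `1`, from `sin πu / u → π`, `u log u → 0` and `∫₀^π log sin = -π log 2`.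
-/

open Real Filter

/-- `g(x) = −x·cot(πx) − 1/(π(1−x))`. -/
noncomputable def g (x : ℝ) : ℝ := -x * Real.cot (π * x) - 1 / (π * (1 - x))

open MeasureTheory Set Topology intervalIntegral

theorem intervalIntegrable_deriv_of_nonneg_of_tendsto {f f' : ℝ → ℝ} {a b fa fb : ℝ}
    (hab : a < b) (hderiv : ∀ x ∈ Ioo a b, HasDerivAt f (f' x) x)
    (hpos : ∀ x ∈ Ioo a b, 0 ≤ f' x) (ha : Tendsto f (𝓝[>] a) (𝓝 fa))
    (hb : Tendsto f (𝓝[<] b) (𝓝 fb)) : IntervalIntegrable f' volume a b := by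
  set F : ℝ → ℝ := Function.update (Function.update f a fa) b fb
  have hFf : ∀ x ∈ Ioo a b, F x = f x := fun x hx => by
    simp only [F, Function.update_of_ne hx.2.ne, Function.update_of_ne hx.1.ne']
  have hFderiv : ∀ x ∈ Ioo a b, HasDerivAt F (f' x) x := fun x hx =>
    (hderiv x hx).congr_of_eventuallyEq (eventually_of_mem (Ioo_mem_nhds hx.1 hx.2) hFf)
  have hFcont : ContinuousOn F (Icc a b) := by
    rw [continuousOn_update_iff, continuousOn_update_iff, Icc_sdiff_right, Ico_sdiff_left]
    refine ⟨⟨fun x hx => (hderiv x hx).continuousAt.continuousWithinAt, fun _ => ?_⟩, fun _ => ?_⟩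
    · exact ha.mono_left (nhdsWithin_mono _ Ioo_subset_Ioi_self)
    · refine (hb.congr' ?_).mono_left (nhdsWithin_mono _ Ico_subset_Iio_self)
      filter_upwards [Ioo_mem_nhdsLT hab] with x hx
      exact (Function.update_of_ne hx.1.ne' _ _).symm
  refine intervalIntegrable_deriv_of_nonneg (uIcc_of_le hab.le ▸ hFcont) ?_ ?_ <;>
    simpa only [min_eq_left hab.le, max_eq_right hab.le]

theorem Real.cot_le_one_div {t : ℝ} (h0 : 0 < t) (hπ : t < π) : cot t ≤ 1 / t := by
  have hsin : 0 < sin t := sin_pos_of_pos_of_lt_pi h0 hπ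
  rw [cot_eq_cos_div_sin]
  rcases lt_or_ge t (π / 2) with ht | ht
  · have hcos : 0 < cos t := cos_pos_of_mem_Ioo ⟨by linarith, ht⟩
    have htan : t ≤ sin t / cos t := tan_eq_sin_div_cos t ▸ le_tan h0.le ht
    rw [div_le_div_iff₀ hsin h0]
    rw [le_div_iff₀ hcos] at htan
    linarith
  · have hcos : cos t ≤ 0 := cos_nonpos_of_pi_div_two_le_of_le ht (by linarith)
    exact (div_nonpos_of_nonpos_of_nonneg hcos hsin.le).trans (by positivity)

theorem Real.tendsto_sin_pi_mul_div : Tendsto (fun u => sin (π * u) / u) (𝓝[≠] 0) (𝓝 π) := by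
  have h : Tendsto (fun u => π * sinc (π * u)) (𝓝 0) (𝓝 π) := by
    have hc : Continuous fun u : ℝ => π * sinc (π * u) := by fun_prop
    simpa using hc.tendsto 0
  refine (h.mono_left nhdsWithin_le_nhds).congr' ?_
  filter_upwards [self_mem_nhdsWithin] with u hu
  rw [sinc_of_ne_zero (mul_ne_zero pi_ne_zero hu)]
  field_simp [pi_ne_zero]

theorem Real.tendsto_log_sin_pi_mul_sub_log :
    Tendsto (fun u => log (sin (π * u)) - log u) (𝓝[>] 0) (𝓝 (log π)) := by
  have h := ((continuousAt_log pi_ne_zero).tendsto.comp tendsto_sin_pi_mul_div).mono_left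
    (nhdsWithin_mono 0 fun u (hu : 0 < u) => hu.ne')
  refine h.congr' ?_
  filter_upwards [Ioo_mem_nhdsGT one_pos] with u hu
  exact log_div (sin_pos_of_pos_of_lt_pi (mul_pos pi_pos hu.1) (by nlinarith [pi_pos, hu.2])).ne'
    hu.1.ne'

theorem Real.intervalIntegrable_log_sin_pi_mul (a b : ℝ) :
    IntervalIntegrable (fun x => log (sin (π * x))) volume a b := by
  simpa [pi_ne_zero] using
    (intervalIntegrable_log_sin (a := π * a) (b := π * b)).comp_mul_left (c := π)

theorem Real.integral_log_sin_pi_mul : ∫ x in (0 : ℝ)..1, log (sin (π * x)) = -log 2 := by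
  rw [integral_comp_mul_left (fun x => log (sin x)) pi_ne_zero, mul_zero, mul_one,
    integral_log_sin_zero_pi, smul_eq_mul]
  field_simp [pi_ne_zero]

noncomputable def negGPrimitive (x : ℝ) : ℝ :=
  (x * log (sin (π * x)) - log (1 - x) - ∫ u in (0 : ℝ)..x, log (sin (π * u))) / π

theorem hasDerivAt_negGPrimitive (x : ℝ) (hx : x ∈ Ioo (0 : ℝ) 1) :
    HasDerivAt negGPrimitive (-g x) x := by
  have hsin : 0 < sin (π * x) := sin_pos_of_pos_of_lt_pi (mul_pos pi_pos hx.1)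
    (by nlinarith [pi_pos, hx.2])
  have h1x : 0 < 1 - x := sub_pos.mpr hx.2
  have hlogsin : HasDerivAt (fun y => log (sin (π * y))) (cos (π * x) * π / sin (π * x)) x := by
    simpa using (((hasDerivAt_id x).const_mul π).sin).log hsin.ne'
  have hlog1x : HasDerivAt (fun y => log (1 - y)) (-1 / (1 - x)) x := by
    simpa using ((hasDerivAt_id x).const_sub 1).log h1x.ne'
  have hmeas : Measurable fun u => log (sin (π * u)) := by fun_prop
  have hprim : HasDerivAt (fun y => ∫ u in (0 : ℝ)..y, log (sin (π * u))) (log (sin (π * x))) x :=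
    integral_hasDerivAt_right (intervalIntegrable_log_sin_pi_mul 0 x)
      hmeas.stronglyMeasurable.stronglyMeasurableAtFilter (by fun_prop (disch := exact hsin.ne'))
  refine ((((hasDerivAt_id' x).mul hlogsin).sub hlog1x).sub hprim).div_const π |>.congr_deriv ?_
  simp only [g, cot_eq_cos_div_sin]
  field_simp
  ring

theorem g_nonpos (x : ℝ) (hx : x ∈ Ioo (0 : ℝ) 1) : g x ≤ 0 := by
  have ht : 0 < π * (1 - x) := mul_pos pi_pos (sub_pos.mpr hx.2)
  have hcot := cot_le_one_div ht (by nlinarith [pi_pos, hx.1])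
  have hreflect : cot (π * x) = -cot (π * (1 - x)) := by
    rw [mul_one_sub, cot_eq_cos_div_sin, cot_eq_cos_div_sin, cos_pi_sub, sin_pi_sub, neg_div,
      neg_neg]
  rw [g, hreflect]
  rcases le_total (cot (π * (1 - x))) 0 with hneg | hpos
  · nlinarith [hx.1, one_div_pos.mpr ht]
  · nlinarith [hx.1, hx.2]

theorem Real.continuous_primitive_log_sin_pi_mul :
    Continuous fun x => ∫ u in (0 : ℝ)..x, log (sin (π * u)) :=
  continuous_primitive intervalIntegrable_log_sin_pi_mul 0

theorem tendsto_negGPrimitive_zero : Tendsto negGPrimitive (𝓝[>] 0) (𝓝 0) := by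
  have hid : Tendsto (fun x : ℝ => x) (𝓝[>] 0) (𝓝 0) := nhdsWithin_le_nhds
  have hmulLog : Tendsto (fun x => x * log x) (𝓝[>] 0) (𝓝 0) := by
    simpa using (continuous_mul_log.tendsto 0).mono_left nhdsWithin_le_nhds
  have hlog : Tendsto (fun x => log (1 - x)) (𝓝[>] 0) (𝓝 0) := by
    have hc : ContinuousAt (fun x => log (1 - x)) 0 := by fun_prop (disch := norm_num)
    simpa using hc.tendsto.mono_left nhdsWithin_le_nhds
  have hprim :=
    (continuous_primitive_log_sin_pi_mul.tendsto 0).mono_left (nhdsWithin_le_nhds (s := Ioi 0))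
  -- `x log sin πx = x (log sin πx - log x) + x log x`
  convert ((((hid.mul tendsto_log_sin_pi_mul_sub_log).add hmulLog).sub hlog).sub hprim).div_const π
    using 1
  · funext x
    simp only [negGPrimitive]
    ring
  · simp

theorem tendsto_one_sub_nhdsLT_one : Tendsto (fun x : ℝ => 1 - x) (𝓝[<] 1) (𝓝[>] 0) :=
  have hc : Continuous fun x : ℝ => 1 - x := by fun_prop
  tendsto_nhdsWithin_iff.mpr ⟨by simpa using (hc.tendsto 1).mono_left nhdsWithin_le_nhds,
    eventually_nhdsWithin_of_forall fun _ hx => mem_Ioi.mpr (sub_pos.mpr hx)⟩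

theorem tendsto_negGPrimitive_one : Tendsto negGPrimitive (𝓝[<] 1) (𝓝 (log (2 * π) / π)) := by
  have hid : Tendsto (fun x : ℝ => x) (𝓝[<] 1) (𝓝 1) := nhdsWithin_le_nhds
  have hφ := tendsto_log_sin_pi_mul_sub_log.comp tendsto_one_sub_nhdsLT_one
  have hmulLog : Tendsto (fun x => (1 - x) * log (1 - x)) (𝓝[<] 1) (𝓝 0) := by
    simpa [Function.comp_def] using (continuous_mul_log.tendsto 0).comp
      (tendsto_one_sub_nhdsLT_one.mono_right nhdsWithin_le_nhds)
  have hprim :=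
    (continuous_primitive_log_sin_pi_mul.tendsto 1).mono_left (nhdsWithin_le_nhds (s := Iio 1))
  -- `x log sin πx - log (1 - x) = x (log sin π(1 - x) - log (1 - x)) - (1 - x) log (1 - x)`
  convert (((hid.mul hφ).sub hmulLog).sub hprim).div_const π using 1
  · funext x
    have hreflect : sin (π * x) = sin (π * (1 - x)) := by rw [mul_one_sub, sin_pi_sub]
    simp only [negGPrimitive, Function.comp_apply, hreflect]
    ring
  · rw [integral_log_sin_pi_mul, log_mul two_ne_zero pi_ne_zero]
    congr 1
    ring

/-- The integral `∫₀¹ g(x) dx` converges and equals `−ln(2π)/π`. -/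
theorem integral_g :
    IntervalIntegrable g MeasureTheory.volume 0 1 ∧
    ∫ x in (0 : ℝ)..1, g x = -Real.log (2 * π) / π := by
  have hneg : IntervalIntegrable (-g) volume 0 1 :=
    intervalIntegrable_deriv_of_nonneg_of_tendsto one_pos hasDerivAt_negGPrimitive
      (fun x hx => neg_nonneg.mpr (g_nonpos x hx)) tendsto_negGPrimitive_zero
      tendsto_negGPrimitive_one
  refine ⟨neg_neg g ▸ hneg.neg, ?_⟩
  have h := integral_eq_sub_of_hasDerivAt_of_tendsto one_pos hasDerivAt_negGPrimitive
    hneg tendsto_negGPrimitive_zero tendsto_negGPrimitive_one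
  rw [intervalIntegral.integral_neg] at h
  rw [neg_div]
  linarith
end

section
/- As x → 0⁺, (g(x) − (−2/π))/x → −1/π; that is, the continuous extension of g to [0,1] (with g(0) = −2/π) is differentiable from the right at 0 with derivative g′(0) = −1/π. -/
open Real Filter Topology

/-!
Dividing by `x` and splitting `1/(x(1−x)) = 1/x + 1/(1−x)` gives
`(g(x) + 2/π)/x = (1/(πx) − cot(πx)) − 1/(π(1−x))`. The first term tends to `0`, since
`0 ≤ 1/t − cot t ≤ t` for small `t > 0`, and the second tends to `1/π`.
-/

namespace Real

lemma cot_lt_inv {t : ℝ} (h0 : 0 < t) (h1 : t < π / 2) : cot t < t⁻¹ := by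
  rw [← tan_inv_eq_cot]
  exact inv_strictAnti₀ h0 (lt_tan h0 h1)

lemma inv_sub_cot_le_self {t : ℝ} (h0 : 0 < t) (h1 : t ≤ 1) : t⁻¹ - cot t ≤ t := by
  have hsin : 0 < sin t := sin_pos_of_pos_of_lt_pi h0 (by linarith [pi_gt_three])
  have hsin_lt : sin t < t := sin_lt h0
  have hsin_gt : t - t ^ 3 / 6 < sin t := sin_gt_sub_cube h0
  have hcos : 1 - t ^ 2 / 2 ≤ cos t := one_sub_sq_div_two_le_cos
  have ht5 : t ^ 5 ≤ t ^ 3 := pow_le_pow_of_le_one h0.le h1 (by norm_num)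
  -- `sin t − t cos t < t³/2 ≤ 5t³/6 < t² sin t`
  rw [cot_eq_cos_div_sin, inv_eq_one_div, div_sub_div _ _ h0.ne' hsin.ne',
    div_le_iff₀ (mul_pos h0 hsin)]
  nlinarith [mul_le_mul_of_nonneg_left hcos h0.le,
    mul_lt_mul_of_pos_left hsin_gt (mul_pos h0 h0)]

lemma tendsto_inv_sub_cot_nhdsGT_zero :
    Tendsto (fun t : ℝ => t⁻¹ - cot t) (𝓝[>] 0) (𝓝 0) := by
  have hIoo : Set.Ioo (0 : ℝ) 1 ∈ 𝓝[>] (0 : ℝ) := Ioo_mem_nhdsGT one_pos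
  refine tendsto_of_tendsto_of_tendsto_of_le_of_le' tendsto_const_nhds
    (tendsto_id.mono_left nhdsWithin_le_nhds) ?_ ?_
  · filter_upwards [hIoo] with t ⟨h0, h1⟩
    exact sub_nonneg.2 (cot_lt_inv h0 (by linarith [pi_gt_three])).le
  · filter_upwards [hIoo] with t ⟨h0, h1⟩
    exact inv_sub_cot_le_self h0 h1.le

end Real

lemma g_sub_div_eq {x : ℝ} (hx0 : x ≠ 0) (hx1 : x ≠ 1) :
    (g x - (-2 / π)) / x = ((π * x)⁻¹ - cot (π * x)) - (π * (1 - x))⁻¹ := by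
  have h1x : 1 - x ≠ 0 := sub_ne_zero.2 hx1.symm
  simp only [g]
  field_simp
  ring

/-- `(g(x) − (−2/π))/x → −1/π` as `x → 0⁺`, i.e. `g′(0) = −1/π` for the
continuous extension of `g` (with `g(0) = −2/π`). -/
theorem g_deriv_at_zero :
    Tendsto (fun x : ℝ => (g x - (-2 / π)) / x) (𝓝[>] (0 : ℝ)) (𝓝 (-1 / π)) := by
  have hmul : Tendsto (π * ·) (𝓝[>] (0 : ℝ)) (𝓝[>] 0) :=
    tendsto_comap.mono_left (comap_mulLeft_nhdsGT_zero pi_pos).ge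
  have hcot := tendsto_inv_sub_cot_nhdsGT_zero.comp hmul
  have hpole : Tendsto (fun x : ℝ => (π * (1 - x))⁻¹) (𝓝[>] 0) (𝓝 π⁻¹) := by
    have hcont : ContinuousAt (fun x : ℝ => (π * (1 - x))⁻¹) 0 :=
      ContinuousAt.inv₀ (by fun_prop) (by simp [pi_ne_zero])
    simpa using hcont.tendsto.mono_left nhdsWithin_le_nhds
  have hlim := hcot.sub hpole
  rw [zero_sub] at hlim
  rw [show -1 / π = -π⁻¹ by ring]
  refine hlim.congr' ?_
  filter_upwards [Ioo_mem_nhdsGT one_pos] with x ⟨hx0, hx1⟩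
  exact (g_sub_div_eq hx0.ne' hx1.ne).symm
end

section
/- As x → 1⁻, (g(x) − (−1/π))/(x − 1) → π/3; that is, the continuous extension of g to [0,1] (with g(1) = −1/π) is differentiable from the left at 1 with derivative g′(1) = π/3. -/
open Real Filter Topology

/-!
Substituting `u = π(1 - x)` and using `cot (π - u) = -cot u` gives
`(g x + 1/π) / (x - 1) = π x · (u⁻¹ - cot u) / u`, and
`(u⁻¹ - cot u) / u = (sin u - u cos u) / u³ / sinc u → 1/3` by the Taylor bounds for
`sin` and `cos` at `0`.
-/

namespace Real

lemma abs_sin_sub_mul_cos_sub_cube_le {u : ℝ} (hu : |u| ≤ 1) :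
    |sin u - u * cos u - u ^ 3 / 3| ≤ |u| ^ 5 := by
  have hsin := sin_bound hu
  have hcos := cos_bound hu
  calc |sin u - u * cos u - u ^ 3 / 3|
      = |(sin u - (u - u ^ 3 / 6)) - u * (cos u - (1 - u ^ 2 / 2))| := by ring_nf
    _ ≤ |sin u - (u - u ^ 3 / 6)| + |u| * |cos u - (1 - u ^ 2 / 2)| := by
        rw [← abs_mul]; exact abs_sub _ _
    _ ≤ |u| ^ 5 / 100 + |u| * (|u| ^ 4 * (5 / 96)) := by gcongr
    _ ≤ |u| ^ 5 := by nlinarith [pow_nonneg (abs_nonneg u) 5]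

lemma tendsto_sin_sub_mul_cos_div_cube :
    Tendsto (fun u : ℝ => (sin u - u * cos u) / u ^ 3) (𝓝[≠] 0) (𝓝 (1 / 3)) := by
  rw [tendsto_iff_norm_sub_tendsto_zero]
  have hsq : Tendsto (fun u : ℝ => u ^ 2) (𝓝[≠] 0) (𝓝 0) :=
    ((continuous_pow 2).tendsto' 0 0 (by simp)).mono_left nhdsWithin_le_nhds
  refine squeeze_zero' (Eventually.of_forall fun _ => norm_nonneg _) ?_ hsq
  filter_upwards [self_mem_nhdsWithin, nhdsWithin_le_nhds (Icc_mem_nhds (by norm_num : (-1 : ℝ) < 0)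
    (by norm_num : (0 : ℝ) < 1))] with u (hu0 : u ≠ 0) hu1
  have hu : |u| ≤ 1 := abs_le.2 hu1
  calc ‖(sin u - u * cos u) / u ^ 3 - 1 / 3‖
      = |sin u - u * cos u - u ^ 3 / 3| / |u ^ 3| := by
        rw [Real.norm_eq_abs, ← abs_div]; congr 1; field_simp
    _ ≤ |u| ^ 5 / |u ^ 3| := by gcongr; exact abs_sin_sub_mul_cos_sub_cube_le hu
    _ = u ^ 2 := by
        rw [abs_pow, ← sq_abs u]; field_simp [abs_ne_zero.2 hu0]

lemma tendsto_inv_sub_cot_div_self :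
    Tendsto (fun u : ℝ => (u⁻¹ - cot u) / u) (𝓝[≠] 0) (𝓝 (1 / 3)) := by
  have hsinc : Tendsto sinc (𝓝[≠] 0) (𝓝 1) :=
    sinc_zero ▸ continuous_sinc.continuousAt.tendsto.mono_left nhdsWithin_le_nhds
  have h := tendsto_sin_sub_mul_cos_div_cube.div hsinc one_ne_zero
  rw [div_one] at h
  refine h.congr' ?_
  filter_upwards [self_mem_nhdsWithin, hsinc.eventually_ne one_ne_zero] with u (hu : u ≠ 0) hs
  rw [sinc_of_ne_zero hu, div_ne_zero_iff] at hs
  rw [Pi.div_apply, cot_eq_cos_div_sin, sinc_of_ne_zero hu]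
  field_simp [hs.1]

end Real

lemma g_add_inv_pi {x : ℝ} (hx : x ≠ 1) :
    g x + π⁻¹ = x * (cot (π * (1 - x)) - (π * (1 - x))⁻¹) := by
  have hcot : cot (π * x) = -cot (π * (1 - x)) := by
    rw [cot_eq_cos_div_sin, cot_eq_cos_div_sin, show π * x = π - π * (1 - x) by ring,
      sin_pi_sub, cos_pi_sub, neg_div]
  have h1x : 1 - x ≠ 0 := sub_ne_zero.2 hx.symm
  rw [g, hcot]
  field_simp
  ring

/-- `(g(x) − (−1/π))/(x−1) → π/3` as `x → 1⁻`, i.e. `g′(1) = π/3` for the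
continuous extension of `g` (with `g(1) = −1/π`). -/
theorem g_deriv_at_one :
    Tendsto (fun x : ℝ => (g x - (-1 / π)) / (x - 1)) (𝓝[<] (1 : ℝ)) (𝓝 (π / 3)) := by
  have hu : Tendsto (fun x : ℝ => π * (1 - x)) (𝓝[<] 1) (𝓝[≠] 0) := by
    refine tendsto_nhdsWithin_of_tendsto_nhds_of_eventually_within _ ?_ ?_
    · exact ((by fun_prop : Continuous fun x : ℝ => π * (1 - x)).tendsto' 1 0 (by simp)).mono_left
        nhdsWithin_le_nhds
    · filter_upwards [self_mem_nhdsWithin] with x (hx : x < 1)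
      exact mul_ne_zero pi_ne_zero (by linarith)
  have hlin : Tendsto (fun x : ℝ => π * x) (𝓝[<] 1) (𝓝 π) :=
    ((by fun_prop : Continuous fun x : ℝ => π * x).tendsto' 1 π (mul_one π)).mono_left
      nhdsWithin_le_nhds
  have h := hlin.mul (tendsto_inv_sub_cot_div_self.comp hu)
  rw [mul_one_div] at h
  refine h.congr' ?_
  filter_upwards [self_mem_nhdsWithin] with x (hx : x < 1)
  have h1x : 1 - x ≠ 0 := by linarith
  have hx1 : x - 1 ≠ 0 := by linarith
  rw [Function.comp_apply, show g x - (-1 / π) = g x + π⁻¹ by ring, g_add_inv_pi hx.ne]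
  field_simp
  ring
end

section
/- As x → 0⁺, (g(x) − (−2/π − x/π + (π/3 − 1/π)x²))/x³ → −1/π; that is, the third-order Taylor expansion of g at 0 is g(x) = −2/π − x/π + (π/3 − 1/π)x² − x³/π + o(x³), so the third derivative of the smooth extension of g at 0 is g′′′(0) = −6/π. -/
/-!
Put `c(t) = t·cot t − (1 − t²/3)`. The Taylor polynomial is exactly the one for which
`(g(x) − P(x))/x³ = −π²·c(πx)/(πx)³ − 1/(π(1−x))`, and the pole term tends to `−1/π`.
Since `c(t) = −(sin t − t cos t − (t²/3) sin t)/sin t`, the degree-five Taylor bound for `sin`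
and the degree-four one for `cos` give `c(t) = O(t⁴)`, so the first term tends to `0`.
-/

open Real Filter Topology

open Asymptotics

lemma abs_sin_sub_mul_cos_sub_le {t : ℝ} (ht : |t| ≤ 1) :
    |sin t - t * cos t - t ^ 2 / 3 * sin t| ≤ |t| ^ 5 / 8 := by
  have hsin := sin_bound ht
  have hcos := cos_bound ht
  have h3 : |1 - t ^ 2 / 3| ≤ 1 := by
    rw [abs_le]; constructor <;> nlinarith [sq_nonneg t, sq_abs t, abs_nonneg t]
  calc |sin t - t * cos t - t ^ 2 / 3 * sin t|
      = |(sin t - (t - t ^ 3 / 6)) * (1 - t ^ 2 / 3) - t * (cos t - (1 - t ^ 2 / 2))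
          + t ^ 5 / 18| := by ring_nf
    _ ≤ |sin t - (t - t ^ 3 / 6)| * |1 - t ^ 2 / 3| + |t| * |cos t - (1 - t ^ 2 / 2)|
          + |t| ^ 5 / 18 := by
      grw [abs_add_le, abs_sub, abs_mul, abs_mul, abs_div, abs_pow]; norm_num
    _ ≤ |t| ^ 5 / 100 * 1 + |t| * (|t| ^ 4 * (5 / 96)) + |t| ^ 5 / 18 := by
      gcongr
    _ ≤ |t| ^ 5 / 8 := by nlinarith [pow_nonneg (abs_nonneg t) 5]

lemma abs_mul_cot_sub_le {t : ℝ} (h0 : t ≠ 0) (ht : |t| ≤ 1) :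
    |t * cot t - (1 - t ^ 2 / 3)| ≤ |t| ^ 4 / 5 := by
  have hsin : 5 / 6 * |t| ≤ |sin t| := by
    have := abs_sub_sin_le t
    have := abs_sub_abs_le_abs_sub t (sin t)
    nlinarith [pow_le_pow_of_le_one (abs_nonneg t) ht (show 1 ≤ 2 by norm_num), abs_nonneg t]
  have hsin0 : sin t ≠ 0 := by
    intro h; rw [h, abs_zero] at hsin; have := abs_pos.2 h0; linarith
  have hcot : t * cot t - (1 - t ^ 2 / 3) =
      -(sin t - t * cos t - t ^ 2 / 3 * sin t) / sin t := by
    rw [cot_eq_cos_div_sin]; field_simp; ring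
  rw [hcot, abs_div, abs_neg, div_le_iff₀ (abs_pos.2 hsin0)]
  calc _ ≤ |t| ^ 5 / 8 := abs_sin_sub_mul_cos_sub_le ht
    _ ≤ |t| ^ 4 / 5 * (5 / 6 * |t|) := by nlinarith [pow_nonneg (abs_nonneg t) 5]
    _ ≤ |t| ^ 4 / 5 * |sin t| := by gcongr

lemma isLittleO_mul_cot_sub :
    (fun t : ℝ => t * cot t - (1 - t ^ 2 / 3)) =o[𝓝[≠] 0] fun t => t ^ 3 := by
  refine IsBigO.trans_isLittleO (g := fun t : ℝ => t ^ 4) ?_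
    ((isLittleO_pow_pow (by norm_num)).mono nhdsWithin_le_nhds)
  refine IsBigO.of_bound (1 / 5) ?_
  filter_upwards [self_mem_nhdsWithin,
    mem_nhdsWithin_of_mem_nhds (Metric.closedBall_mem_nhds (0 : ℝ) one_pos)] with t h0 ht
  rw [Metric.mem_closedBall, dist_zero_right, norm_eq_abs] at ht
  simpa [div_eq_inv_mul] using abs_mul_cot_sub_le h0 ht

lemma g_sub_taylor_div_cube {x : ℝ} (h0 : x ≠ 0) (h1 : x ≠ 1) :
    (g x - (-2 / π - x / π + (π / 3 - 1 / π) * x ^ 2)) / x ^ 3 =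
      -π ^ 2 * ((π * x * cot (π * x) - (1 - (π * x) ^ 2 / 3)) / (π * x) ^ 3)
        - 1 / (π * (1 - x)) := by
  have : 1 - x ≠ 0 := sub_ne_zero.2 h1.symm
  unfold g
  field_simp
  ring

/-- Third-order Taylor expansion of `g` at `0`:
`g(x) = −2/π − x/π + (π/3 − 1/π)x² − x³/π + o(x³)`, i.e.
`(g(x) − (−2/π − x/π + (π/3 − 1/π)x²))/x³ → −1/π` as `x → 0⁺`
(so that `g′′′(0) = −6/π`). -/
theorem g_third_order_at_zero :
    Tendsto (fun x : ℝ =>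
        (g x - (-2 / π - x / π + (π / 3 - 1 / π) * x ^ 2)) / x ^ 3)
      (𝓝[>] (0 : ℝ)) (𝓝 (-1 / π)) := by
  have hπx : Tendsto (fun x : ℝ => π * x) (𝓝[>] 0) (𝓝[≠] 0) :=
    ((continuous_const_mul π).tendsto' 0 0 (mul_zero π)).inf
      (tendsto_principal_principal.2 fun x hx => mul_ne_zero pi_ne_zero hx.ne')
  have hcot := isLittleO_mul_cot_sub.tendsto_div_nhds_zero.comp hπx
  have hpole : Tendsto (fun x : ℝ => 1 / (π * (1 - x))) (𝓝[>] 0) (𝓝 (1 / π)) := by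
    have : ContinuousAt (fun x : ℝ => 1 / (π * (1 - x))) 0 :=
      continuousAt_const.div (by fun_prop) (by simp [pi_ne_zero])
    simpa using this.tendsto.mono_left nhdsWithin_le_nhds
  have hlim := (hcot.const_mul (-π ^ 2)).sub hpole
  rw [mul_zero, zero_sub, ← neg_div] at hlim
  refine hlim.congr' ?_
  filter_upwards [Ioo_mem_nhdsGT (zero_lt_one' ℝ)] with x hx
  exact (g_sub_taylor_div_cube hx.1.ne' hx.2.ne).symm
end

section
/- As x → 1⁻, with t = 1 − x, (g(x) − (−1/π − (π/3)t + (π/3)t²))/t³ → −π³/45; that is, the third-order Taylor expansion of g at 1 in t = 1 − x is g(x) = −1/π − (π/3)t + (π/3)t² − (π³/45)t³ + o(t³), so the third derivative of the smooth extension of g at 1 is g′′′(1) = 2π³/15. -/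
/-!
Put `t = 1 - x`. Since `cot (π - πt) = -cot (πt)`, the remainder in the statement equals
`(1 - t) π³ (cot u - 1/u + u/3) / u³` at `u = πt`, so everything reduces to the Laurent expansion
`cot u = 1/u - u/3 - u³/45 + O(u⁵)`. Writing `cot u - 1/u + u/3` as
`(u cos u - sin u + u² sin u / 3) / (u sin u)`, the coefficient `-1/45` comes from two applications
of L'Hôpital's rule: the derivative of that numerator is `u (u cos u - sin u) / 3`, and
`(u cos u - sin u) / u³ → -1/3` because its derivative is `-u sin u`.
-/

open Real Filter Topology

lemma tendsto_sin_div_self_nhdsNE : Tendsto (fun u : ℝ => sin u / u) (𝓝[≠] 0) (𝓝 1) := by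
  have h := (continuous_sinc.tendsto 0).mono_left (nhdsWithin_le_nhds (s := {0}ᶜ))
  rw [sinc_zero] at h
  refine h.congr' ?_
  filter_upwards [self_mem_nhdsWithin] with u hu using sinc_of_ne_zero hu

lemma tendsto_div_pow_nhdsNE_zero_of_hasDerivAt {f f' : ℝ → ℝ} {n : ℕ} {l : ℝ} (hn : n ≠ 0)
    (hf : ∀ u, HasDerivAt f (f' u) u) (hf0 : f 0 = 0)
    (hlim : Tendsto (fun u => f' u / (n * u ^ (n - 1))) (𝓝[≠] 0) (𝓝 l)) :
    Tendsto (fun u => f u / u ^ n) (𝓝[≠] 0) (𝓝 l) := by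
  refine HasDerivAt.lhopital_zero_nhdsNE (.of_forall hf)
    (.of_forall fun u => hasDerivAt_pow n u) ?_ ?_ ?_ hlim
  · filter_upwards [self_mem_nhdsWithin] with u hu
    exact mul_ne_zero (Nat.cast_ne_zero.mpr hn) (pow_ne_zero _ hu)
  · have h := (hf 0).continuousAt.tendsto.mono_left (nhdsWithin_le_nhds (s := {0}ᶜ))
    rwa [hf0] at h
  · have h := ((continuous_pow n).tendsto 0).mono_left (nhdsWithin_le_nhds (s := {(0 : ℝ)}ᶜ))
    rwa [zero_pow hn] at h

lemma tendsto_mul_cos_sub_sin_div_pow_three :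
    Tendsto (fun u : ℝ => (u * cos u - sin u) / u ^ 3) (𝓝[≠] 0) (𝓝 (-1 / 3)) := by
  refine tendsto_div_pow_nhdsNE_zero_of_hasDerivAt (f' := fun u => -u * sin u) three_ne_zero
    (fun u => ((hasDerivAt_id u).mul (hasDerivAt_cos u)).sub (hasDerivAt_sin u)
      |>.congr_deriv (by simp)) (by simp) ?_
  have h := tendsto_sin_div_self_nhdsNE.const_mul (-1 / 3)
  rw [mul_one] at h
  refine h.congr' ?_
  filter_upwards [self_mem_nhdsWithin] with u (hu : u ≠ 0)
  field_simp
  ring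

lemma tendsto_mul_cos_sub_sin_add_div_pow_five :
    Tendsto (fun u : ℝ => (u * cos u - sin u + u ^ 2 * sin u / 3) / u ^ 5) (𝓝[≠] 0)
      (𝓝 (-1 / 45)) := by
  refine tendsto_div_pow_nhdsNE_zero_of_hasDerivAt
    (f' := fun u => u * (u * cos u - sin u) / 3) (by norm_num)
    (fun u => (((hasDerivAt_id u).mul (hasDerivAt_cos u)).sub (hasDerivAt_sin u)).add
      (((hasDerivAt_pow 2 u).mul (hasDerivAt_sin u)).div_const 3)
      |>.congr_deriv (by simp; ring)) (by simp) ?_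
  have h := tendsto_mul_cos_sub_sin_div_pow_three.const_mul (1 / 15)
  rw [show (1 / 15 : ℝ) * (-1 / 3) = -1 / 45 by norm_num] at h
  refine h.congr' ?_
  filter_upwards [self_mem_nhdsWithin] with u (hu : u ≠ 0)
  field_simp
  ring

lemma tendsto_cot_sub_inv_add_div_three_div_pow_three :
    Tendsto (fun u : ℝ => (cot u - u⁻¹ + u / 3) / u ^ 3) (𝓝[≠] 0) (𝓝 (-1 / 45)) := by
  have h := tendsto_mul_cos_sub_sin_add_div_pow_five.mul
    (tendsto_sin_div_self_nhdsNE.inv₀ one_ne_zero)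
  rw [inv_one, mul_one] at h
  refine h.congr' ?_
  filter_upwards [self_mem_nhdsWithin, tendsto_sin_div_self_nhdsNE.eventually_ne one_ne_zero]
    with u (hu : u ≠ 0) hsu
  have hs : sin u ≠ 0 := (div_ne_zero_iff.mp hsu).1
  rw [cot_eq_cos_div_sin]
  field_simp

lemma g_one_sub (t : ℝ) : g (1 - t) = (1 - t) * cot (π * t) - 1 / (π * t) := by
  have h : π * (1 - t) = π - π * t := by ring
  simp only [g, sub_sub_cancel, h, cot_eq_cos_div_sin, cos_pi_sub, sin_pi_sub]
  ring

lemma g_one_sub_sub_taylor (t : ℝ) :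
    (g (1 - t) - (-1 / π - (π / 3) * t + (π / 3) * t ^ 2)) / t ^ 3 =
      (1 - t) * π ^ 3 * ((cot (π * t) - (π * t)⁻¹ + π * t / 3) / (π * t) ^ 3) := by
  rw [g_one_sub]
  rcases eq_or_ne t 0 with rfl | ht
  · simp
  · have := pi_ne_zero
    field_simp
    ring

/-- Third-order Taylor expansion of `g` at `1` in `t = 1 − x`:
`g(x) = −1/π − (π/3)t + (π/3)t² − (π³/45)t³ + o(t³)`, i.e.
`(g(x) − (−1/π − (π/3)(1−x) + (π/3)(1−x)²))/(1−x)³ → −π³/45` as `x → 1⁻`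
(so that `g′′′(1) = 2π³/15`). -/
theorem g_third_order_at_one :
    Tendsto (fun x : ℝ =>
        (g x - (-1 / π - (π / 3) * (1 - x) + (π / 3) * (1 - x) ^ 2)) / (1 - x) ^ 3)
      (𝓝[<] (1 : ℝ)) (𝓝 (-π ^ 3 / 45)) := by
  have hπx : Tendsto (fun x : ℝ => π * (1 - x)) (𝓝[<] 1) (𝓝[≠] 0) := by
    refine tendsto_nhdsWithin_of_tendsto_nhds_of_eventually_within _ ?_ ?_
    · exact (Continuous.tendsto' (by fun_prop) 1 0 (by simp)).mono_left nhdsWithin_le_nhds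
    · filter_upwards [self_mem_nhdsWithin] with x (hx : x < 1)
      exact mul_ne_zero pi_ne_zero (sub_ne_zero.mpr hx.ne')
  have hx : Tendsto (fun x : ℝ => x * π ^ 3) (𝓝[<] 1) (𝓝 (1 * π ^ 3)) :=
    ((continuous_id.mul continuous_const).tendsto 1).mono_left nhdsWithin_le_nhds
  have h := hx.mul (tendsto_cot_sub_inv_add_div_three_div_pow_three.comp hπx)
  rw [show 1 * π ^ 3 * (-1 / 45) = -π ^ 3 / 45 by ring] at h
  refine h.congr fun x => ?_
  simpa using (g_one_sub_sub_taylor (1 - x)).symm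
end

section
/- Let f : [0,1] → ℝ be continuously differentiable and let k ≥ 1 be an integer. Then the series ∑_{m=1}^{∞} ∫₀¹ f(x) cos(2πmkx) dx converges, and the Poisson summation formula for finite sums holds: ∑_{m=1}^{k−1} f(m/k) = −f(0)/2 − f(1)/2 + k∫₀¹ f(x) dx + 2k ∑_{m=1}^{∞} ∫₀¹ f(x) cos(2πmkx) dx. -/
/-!
Write `c n` for the Fourier coefficients of a function `g` on `[0,1]`. Evaluating its Fourier
series at the points `j/k` and summing over `j < k` kills every frequency not divisible by `k`,
because the `k`-th roots of unity sum to zero; hence `∑_{j<k} g(j/k) = k ∑_{m ∈ ℤ} c (k m)`, and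
pairing `c n` with `c (-n)` turns the right side into the cosine series. This needs the Fourier
series to converge pointwise: if `g 0 = g 1` and `g' ∈ L²`, then `c n = c' n / (2π i n)`, so
`|c n| ≤ (n⁻² + |c' n|²) / 2` up to a constant, and Bessel's inequality for `g'` makes `(c n)`
summable. A general `f` is reduced to this case by subtracting `(f 1 - f 0) x`, which is
orthogonal to `cos (2π n x)` for `n ≠ 0`.
-/

open Real Filter Topology Set MeasureTheory

theorem ContinuousOn.memLp_of_isCompact {X E : Type*} [TopologicalSpace X] [MeasurableSpace X]
    [OpensMeasurableSpace X] [T2Space X] [NormedAddCommGroup E] [SecondCountableTopologyEither X E]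
    {μ : Measure X} [IsFiniteMeasureOnCompacts μ] {f : X → E} {s : Set X} (hs : IsCompact s)
    (hf : ContinuousOn f s) (p : ENNReal) : MemLp f p (μ.restrict s) := by
  obtain ⟨C, hC⟩ := hs.exists_bound_of_continuousOn hf
  have : IsFiniteMeasure (μ.restrict s) := isFiniteMeasure_restrict.mpr hs.measure_lt_top.ne
  exact MemLp.of_bound (hf.aestronglyMeasurable hs.measurableSet) C
    (ae_restrict_of_forall_mem hs.measurableSet hC)

theorem tendsto_sum_Icc_one_of_hasSum {M : Type*} [AddCommMonoid M] [TopologicalSpace M]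
    {a : ℕ → M} {s : M} (h : HasSum (fun m ↦ a (m + 1)) s) :
    Tendsto (fun N ↦ ∑ m ∈ Finset.Icc 1 N, a m) atTop (𝓝 s) := by
  convert h.tendsto_sum_nat using 2 with N
  rw [← Finset.Ico_add_one_right_eq_Icc, Finset.sum_Ico_eq_sum_range, Nat.add_sub_cancel]
  simp only [add_comm 1]

theorem sum_range_natCast_div_self {K : Type*} [Field K] [CharZero K] {k : ℕ} (hk : k ≠ 0) :
    ∑ j ∈ Finset.range k, (j : K) / k = (k - 1) / 2 := by
  have hgauss : (((∑ j ∈ Finset.range k, j) * 2 : ℕ) : K) = ((k * (k - 1) : ℕ) : K) :=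
    congrArg _ (Finset.sum_range_id_mul_two k)
  push_cast [Nat.cast_sub (Nat.one_le_iff_ne_zero.mpr hk)] at hgauss
  have : (k : K) ≠ 0 := Nat.cast_ne_zero.mpr hk
  rw [← Finset.sum_div]
  field_simp
  linear_combination hgauss

theorem sum_range_zpow_pow_eq_ite {K : Type*} [Field K] {ζ : K} {k : ℕ}
    (hζ : IsPrimitiveRoot ζ k) (n : ℤ) :
    ∑ j ∈ Finset.range k, (ζ ^ n) ^ j = if (k : ℤ) ∣ n then (k : K) else 0 := by
  split_ifs with hdvd
  · simp [(hζ.zpow_eq_one_iff_dvd n).mpr hdvd]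
  · have hne : ζ ^ n ≠ 1 := fun h ↦ hdvd ((hζ.zpow_eq_one_iff_dvd n).mp h)
    rw [geom_sum_eq hne, ← zpow_natCast, ← zpow_mul, mul_comm, zpow_mul, zpow_natCast,
      hζ.pow_eq_one, one_zpow, sub_self, zero_div]

theorem sum_range_fourier_eq_ite {T : ℝ} (hT : T ≠ 0) {k : ℕ} (hk : k ≠ 0) (n : ℤ) :
    ∑ j ∈ Finset.range k, fourier n ((j * T / k : ℝ) : AddCircle T) =
      if (k : ℤ) ∣ n then (k : ℂ) else 0 := by
  rw [← sum_range_zpow_pow_eq_ite (Complex.isPrimitiveRoot_exp k hk) n]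
  refine Finset.sum_congr rfl fun j _ ↦ ?_
  rw [fourier_coe_apply, ← Complex.exp_int_mul, ← Complex.exp_nat_mul]
  congr 1
  have : (k : ℂ) ≠ 0 := Nat.cast_ne_zero.mpr hk
  have : (T : ℂ) ≠ 0 := Complex.ofReal_ne_zero.mpr hT
  push_cast
  field_simp

theorem fourierCoeffOn_zero {a b : ℝ} (hab : a < b) (F : ℝ → ℂ) :
    fourierCoeffOn hab F 0 = (1 / (b - a)) • ∫ x in a..b, F x := by
  simp [fourierCoeffOn_eq_integral]

theorem fourierCoeffOn_eq_div_mul_fourierCoeffOn_deriv {a b : ℝ} (hab : a < b) {F F' : ℝ → ℂ}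
    (hF : ContinuousOn F (Icc a b)) (hperiodic : F a = F b)
    (hderiv : ∀ x ∈ Ioo a b, HasDerivAt F (F' x) x) (hF' : IntervalIntegrable F' volume a b)
    {n : ℤ} (hn : n ≠ 0) :
    fourierCoeffOn hab F n = (b - a) / (2 * π * Complex.I * n) * fourierCoeffOn hab F' n := by
  rw [fourierCoeffOn_of_hasDerivAt_Ioo hab hn (by rwa [uIcc_of_le hab.le])
    (by simpa [hab.le] using hderiv) hF', hperiodic, sub_self, mul_zero, zero_sub]
  have : (n : ℂ) ≠ 0 := Int.cast_ne_zero.mpr hn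
  field_simp

theorem summable_fourierCoeffOn_of_hasDerivAt {a b : ℝ} (hab : a < b) {F F' : ℝ → ℂ}
    (hF : ContinuousOn F (Icc a b)) (hperiodic : F a = F b)
    (hderiv : ∀ x ∈ Ioo a b, HasDerivAt F (F' x) x)
    (hF' : MemLp F' 2 (volume.restrict (Ioc a b))) :
    Summable (fourierCoeffOn hab F) := by
  have hint : IntervalIntegrable F' volume a b :=
    (intervalIntegrable_iff_integrableOn_Ioc_of_le hab.le).mpr (hF'.integrable one_le_two)
  have hsq : Summable fun n : ℤ ↦ ‖fourierCoeffOn hab F' n‖ ^ 2 :=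
    (hasSum_sq_fourierCoeffOn hab hF').summable
  have hinv : Summable fun n : ℤ ↦ 1 / (n : ℝ) ^ 2 := summable_one_div_int_pow.mpr one_lt_two
  refine .of_norm_bounded_eventually (((hinv.add hsq).div_const 2).mul_left ((b - a) / (2 * π)))
    ((eventually_cofinite_ne 0).mono fun n hn ↦ ?_)
  rw [fourierCoeffOn_eq_div_mul_fourierCoeffOn_deriv hab hF hperiodic hderiv hint hn]
  have hnorm :
      ‖((b - a) / (2 * π * Complex.I * n) : ℂ)‖ = (b - a) / (2 * π) * |(n : ℝ)|⁻¹ := by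
    have hba : ‖(b : ℂ) - a‖ = b - a := by
      rw [← Complex.ofReal_sub, Complex.norm_real, norm_of_nonneg (sub_pos.mpr hab).le]
    simp [hba, abs_of_pos pi_pos]
    ring
  have hamgm := two_mul_le_add_sq |(n : ℝ)|⁻¹ ‖fourierCoeffOn hab F' n‖
  rw [inv_pow, sq_abs] at hamgm
  rw [norm_mul, hnorm, mul_assoc]
  gcongr
  rw [one_div]
  linarith

theorem hasSum_fourierCoeffOn_mul_fourier {a b : ℝ} (hab : a < b) {F : ℝ → ℂ}
    (hF : ContinuousOn F (Icc a b)) (hperiodic : F a = F b)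
    (hsum : Summable (fourierCoeffOn hab F)) {x : ℝ} (hx : x ∈ Ico a b) :
    HasSum (fun n ↦ fourierCoeffOn hab F n * fourier n (x : AddCircle (b - a))) (F x) := by
  have : Fact (0 < b - a) := ⟨sub_pos.mpr hab⟩
  have hb : a + (b - a) = b := add_sub_cancel a b
  let G : C(AddCircle (b - a), ℂ) :=
    ⟨AddCircle.liftIco (b - a) a F, AddCircle.liftIco_continuous (by rwa [hb]) (by rwa [hb])⟩
  have hcoeff : fourierCoeff G = fourierCoeffOn hab F := by
    ext n
    rw [show ⇑G = AddCircle.liftIco (b - a) a F from rfl, fourierCoeff_liftIco_eq]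
    -- `fourierCoeffOn` depends on the right endpoint only through its value
    generalize_proofs h
    revert h
    rw [hb]
    intro; rfl
  have hG : G x = F x := AddCircle.liftIco_coe_apply (by rwa [hb])
  have h := has_pointwise_sum_fourier_series_of_summable (hcoeff ▸ hsum) (x : AddCircle (b - a))
  rwa [hcoeff, hG] at h

theorem hasSum_natCast_mul_fourierCoeffOn_natCast_mul {T : ℝ} (hT : 0 < T) {F : ℝ → ℂ}
    (hF : ContinuousOn F (Icc 0 T)) (hperiodic : F 0 = F T)
    (hsum : Summable (fourierCoeffOn hT F)) {k : ℕ} (hk : k ≠ 0) :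
    HasSum (fun m : ℤ ↦ k * fourierCoeffOn hT F (k * m))
      (∑ j ∈ Finset.range k, F (j * T / k)) := by
  have hpoint (j : ℕ) (hj : j ∈ Finset.range k) : HasSum (fun n ↦ fourierCoeffOn hT F n *
      fourier n ((j * (T - 0) / k : ℝ) : AddCircle (T - 0))) (F (j * T / k)) := by
    rw [show (j : ℝ) * (T - 0) / k = j * T / k by rw [sub_zero]]
    refine hasSum_fourierCoeffOn_mul_fourier hT hF hperiodic hsum ⟨by positivity, ?_⟩
    rw [mul_div_right_comm]
    exact mul_lt_of_lt_one_left hT ((div_lt_one (by positivity)).mpr (by simpa using hj))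
  have hall : HasSum (fun n ↦ fourierCoeffOn hT F n * if (k : ℤ) ∣ n then (k : ℂ) else 0)
      (∑ j ∈ Finset.range k, F (j * T / k)) := by
    convert hasSum_sum hpoint with n
    rw [← Finset.mul_sum, sum_range_fourier_eq_ite (sub_ne_zero.mpr hT.ne') hk]
  have hinj : Function.Injective fun m : ℤ ↦ (k : ℤ) * m :=
    mul_right_injective₀ (Int.natCast_ne_zero.mpr hk)
  refine ((hinj.hasSum_iff fun n hn ↦ ?_).mpr hall).congr_fun fun m ↦ ?_
  · rw [if_neg fun ⟨m, hm⟩ ↦ hn ⟨m, hm.symm⟩, mul_zero]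
  · rw [Function.comp_apply, if_pos (dvd_mul_right _ m), mul_comm]

theorem fourierCoeffOn_ofReal_add_fourierCoeffOn_ofReal_neg {a b : ℝ} (hab : a < b)
    {g : ℝ → ℝ} (hg : IntervalIntegrable g volume a b) (n : ℤ) :
    fourierCoeffOn hab (fun x ↦ (g x : ℂ)) n + fourierCoeffOn hab (fun x ↦ (g x : ℂ)) (-n) =
      ((2 / (b - a) * ∫ x in a..b, g x * Real.cos (2 * π * n * x / (b - a)) : ℝ) : ℂ) := by
  have hint (m : ℤ) : IntervalIntegrable
      (fun x : ℝ ↦ fourier (-m) (x : AddCircle (b - a)) • (g x : ℂ)) volume a b :=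
    IntervalIntegrable.continuousOn_mul ⟨hg.1.ofReal, hg.2.ofReal⟩
      ((map_continuous _).comp (AddCircle.continuous_mk' _)).continuousOn
  have hpair : ∫ x in a..b, (fourier (-n) (x : AddCircle (b - a)) • (g x : ℂ) +
      fourier (-(-n)) (x : AddCircle (b - a)) • (g x : ℂ)) =
      ((∫ x in a..b, 2 * (g x * Real.cos (2 * π * n * x / (b - a))) : ℝ) : ℂ) := by
    rw [← intervalIntegral.integral_ofReal]
    refine intervalIntegral.integral_congr fun x _ ↦ ?_
    simp only [fourier_coe_apply, smul_eq_mul, neg_neg, Int.cast_neg]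
    push_cast
    rw [mul_left_comm, Complex.two_cos]
    ring_nf
  rw [fourierCoeffOn_eq_integral, fourierCoeffOn_eq_integral, ← smul_add,
    ← intervalIntegral.integral_add (hint n) (hint (-n)), hpair,
    intervalIntegral.integral_const_mul, Complex.real_smul]
  push_cast
  ring

theorem integral_id_mul_cos_two_pi_int_mul {n : ℤ} (hn : n ≠ 0) :
    ∫ x in (0 : ℝ)..1, x * Real.cos (2 * π * n * x) = 0 := by
  have hω : 2 * π * n ≠ 0 := by simp [hn, pi_ne_zero]
  have hderiv (x : ℝ) : HasDerivAt
      (fun y ↦ y * Real.sin (2 * π * n * y) / (2 * π * n) +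
        Real.cos (2 * π * n * y) / (2 * π * n) ^ 2)
      (x * Real.cos (2 * π * n * x)) x := by
    have hlin : HasDerivAt (fun y ↦ 2 * π * n * y) (2 * π * n) x := by
      simpa using (hasDerivAt_id x).const_mul (2 * π * n)
    refine ((((hasDerivAt_id' x).mul hlin.sin).div_const (2 * π * n)).add
      (hlin.cos.div_const ((2 * π * n) ^ 2))).congr_deriv ?_
    field_simp
    ring
  rw [intervalIntegral.integral_eq_sub_of_hasDerivAt (fun x _ ↦ hderiv x)
    ((by fun_prop : Continuous fun x : ℝ ↦ x * Real.cos (2 * π * n * x)).intervalIntegrable 0 1)]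
  have hsin : Real.sin (2 * π * n) = 0 := by
    rw [show 2 * π * n = (2 * n : ℤ) * π by push_cast; ring, Real.sin_int_mul_pi]
  have hcos : Real.cos (2 * π * n) = 1 := by
    rw [show 2 * π * n = n * (2 * π) by ring, Real.cos_int_mul_two_pi]
  simp [hsin, hcos]

theorem integral_sub_const_mul_id_mul_cos {f : ℝ → ℝ} (hf : IntervalIntegrable f volume 0 1)
    (c : ℝ) {n : ℤ} (hn : n ≠ 0) :
    ∫ x in (0 : ℝ)..1, (f x - c * x) * Real.cos (2 * π * n * x) =
      ∫ x in (0 : ℝ)..1, f x * Real.cos (2 * π * n * x) := by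
  have hcos : Continuous fun x ↦ Real.cos (2 * π * n * x) := by fun_prop
  have hid : IntervalIntegrable (fun x ↦ x * Real.cos (2 * π * n * x)) volume 0 1 :=
    (continuous_id.mul hcos).intervalIntegrable 0 1
  simp_rw [sub_mul, mul_assoc c]
  rw [intervalIntegral.integral_sub (hf.mul_continuousOn hcos.continuousOn) (hid.const_mul c),
    intervalIntegral.integral_const_mul, integral_id_mul_cos_two_pi_int_mul hn, mul_zero,
    sub_zero]

theorem hasSum_two_mul_integral_mul_cos {g g' : ℝ → ℝ} (hg : ContinuousOn g (Icc 0 1))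
    (hperiodic : g 0 = g 1) (hderiv : ∀ x ∈ Ioo 0 1, HasDerivAt g (g' x) x)
    (hg' : MemLp g' 2 (volume.restrict (Ioc 0 1))) {k : ℕ} (hk : k ≠ 0) :
    HasSum (fun m : ℕ ↦ 2 * k * ∫ x in (0 : ℝ)..1, g x * Real.cos (2 * π * m * k * x))
      (∑ j ∈ Finset.range k, g (j / k) + k * ∫ x in (0 : ℝ)..1, g x) := by
  set F : ℝ → ℂ := fun x ↦ (g x : ℂ)
  have hF : ContinuousOn F (Icc 0 1) := Complex.continuous_ofReal.comp_continuousOn hg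
  have hFperiodic : F 0 = F 1 := congrArg Complex.ofReal hperiodic
  have hsum := summable_fourierCoeffOn_of_hasDerivAt one_pos hF hFperiodic
    (fun x hx ↦ (hderiv x hx).ofReal_comp) hg'.ofReal
  have hint : IntervalIntegrable g volume 0 1 :=
    hg.intervalIntegrable_of_Icc zero_le_one
  have hterm (m : ℕ) : (k : ℂ) * fourierCoeffOn one_pos F (k * m) +
      k * fourierCoeffOn one_pos F (k * -m) =
      ((2 * k * ∫ x in (0 : ℝ)..1, g x * Real.cos (2 * π * m * k * x) : ℝ) : ℂ) := by
    rw [← mul_add, mul_neg, fourierCoeffOn_ofReal_add_fourierCoeffOn_ofReal_neg one_pos hint]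
    push_cast
    simp only [sub_zero, div_one, show ∀ x : ℝ, 2 * π * (k * m) * x = 2 * π * m * k * x by
      intro x; ring]
    ring
  have hzero :
      (k : ℂ) * fourierCoeffOn one_pos F (k * 0) = ((k * ∫ x in (0 : ℝ)..1, g x : ℝ) : ℂ) := by
    rw [mul_zero, fourierCoeffOn_zero, intervalIntegral.integral_ofReal]
    simp
  have h := hasSum_natCast_mul_fourierCoeffOn_natCast_mul one_pos hF hFperiodic hsum hk
  replace h := h.nat_add_neg
  simp only [hterm, hzero, mul_one] at h
  rw [← Complex.hasSum_ofReal, Complex.ofReal_add, Complex.ofReal_sum]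
  exact h

theorem hasSum_two_mul_integral_mul_cos_succ {f f' : ℝ → ℝ} (hf : ContinuousOn f (Icc 0 1))
    (hderiv : ∀ x ∈ Ioo 0 1, HasDerivAt f (f' x) x)
    (hf' : MemLp f' 2 (volume.restrict (Ioc 0 1))) {k : ℕ} (hk : k ≠ 0) :
    HasSum
      (fun m : ℕ ↦ 2 * k * ∫ x in (0 : ℝ)..1, f x * Real.cos (2 * π * (m + 1 : ℕ) * k * x))
      (∑ j ∈ Finset.range k, f (j / k) + (f 1 - f 0) / 2 - k * ∫ x in (0 : ℝ)..1, f x) := by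
  set c := f 1 - f 0
  set g : ℝ → ℝ := fun x ↦ f x - c * x
  have hg : ContinuousOn g (Icc 0 1) := hf.sub (continuousOn_const.mul continuousOn_id)
  have hgderiv (x : ℝ) (hx : x ∈ Ioo 0 1) : HasDerivAt g (f' x - c) x :=
    ((hderiv x hx).sub ((hasDerivAt_id' x).const_mul c)).congr_deriv (by ring)
  have hg' : MemLp (fun x ↦ f' x - c) 2 (volume.restrict (Ioc 0 1)) :=
    hf'.sub (memLp_const c)
  have hP := hasSum_two_mul_integral_mul_cos hg (by simp [g, c]) hgderiv hg' hk
  have hfint : IntervalIntegrable f volume 0 1 := hf.intervalIntegrable_of_Icc zero_le_one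
  have hchord : IntervalIntegrable (fun x ↦ c * x) volume 0 1 :=
    (continuous_const.mul continuous_id).intervalIntegrable 0 1
  have hcos (m : ℕ) : ∫ x in (0 : ℝ)..1, g x * Real.cos (2 * π * (m + 1 : ℕ) * k * x) =
      ∫ x in (0 : ℝ)..1, f x * Real.cos (2 * π * (m + 1 : ℕ) * k * x) := by
    have h := integral_sub_const_mul_id_mul_cos hfint c (n := (m + 1) * k) (by positivity)
    push_cast at h ⊢
    simpa only [mul_assoc] using h
  have hgsum :
      ∑ j ∈ Finset.range k, g (j / k) = ∑ j ∈ Finset.range k, f (j / k) - c * (k - 1) / 2 := by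
    rw [Finset.sum_sub_distrib, ← Finset.mul_sum, sum_range_natCast_div_self hk, mul_div_assoc]
  have hgint : ∫ x in (0 : ℝ)..1, g x = (∫ x in (0 : ℝ)..1, f x) - c / 2 := by
    rw [intervalIntegral.integral_sub hfint hchord, intervalIntegral.integral_const_mul,
      integral_id]
    ring
  rw [← hasSum_nat_add_iff' 1] at hP
  simp only [hcos] at hP
  have hvalue : ∑ j ∈ Finset.range k, g (j / k) + k * (∫ x in (0 : ℝ)..1, g x) -
      ∑ i ∈ Finset.range 1, 2 * k * ∫ x in (0 : ℝ)..1, g x * Real.cos (2 * π * i * k * x) =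
      ∑ j ∈ Finset.range k, f (j / k) + c / 2 - k * ∫ x in (0 : ℝ)..1, f x := by
    simp only [Finset.sum_range_one, Nat.cast_zero, mul_zero, zero_mul, Real.cos_zero, mul_one,
      hgsum, hgint]
    ring
  rwa [hvalue] at hP

/-- Poisson summation formula for finite sums: for `f` continuously differentiable
on `[0,1]` and `k ≥ 1`, the series `∑_{m=1}^∞ ∫₀¹ f(x) cos(2πmkx) dx` converges and
`∑_{m=1}^{k−1} f(m/k) = −f(0)/2 − f(1)/2 + k∫₀¹ f + 2k ∑_{m=1}^∞ ∫₀¹ f(x) cos(2πmkx) dx`. -/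
theorem poisson_summation_finite (f : ℝ → ℝ)
    (hf : ContDiffOn ℝ 1 f (Set.Icc 0 1)) (k : ℕ) (hk : 1 ≤ k) :
    ∃ S : ℝ,
      Tendsto (fun N : ℕ => ∑ m ∈ Finset.Icc 1 N,
          ∫ x in (0 : ℝ)..1, f x * Real.cos (2 * π * m * k * x)) atTop (𝓝 S) ∧
      ∑ m ∈ Finset.Icc 1 (k - 1), f (m / k) =
        -f 0 / 2 - f 1 / 2 + k * (∫ x in (0 : ℝ)..1, f x) + 2 * k * S := by
  have hk0 : k ≠ 0 := Nat.one_le_iff_ne_zero.mp hk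
  have hderiv (x : ℝ) (hx : x ∈ Ioo 0 1) : HasDerivAt f (derivWithin f (Icc 0 1) x) x :=
    (hf.differentiableOn one_ne_zero x (Ioo_subset_Icc_self hx)).hasDerivWithinAt.hasDerivAt
      (Icc_mem_nhds hx.1 hx.2)
  have hf' : MemLp (derivWithin f (Icc 0 1)) 2 (volume.restrict (Ioc 0 1)) :=
    ((hf.continuousOn_derivWithin (uniqueDiffOn_Icc zero_lt_one) le_rfl).memLp_of_isCompact
      isCompact_Icc 2).mono_measure (Measure.restrict_mono Ioc_subset_Icc_self le_rfl)
  have h2k : (2 * k : ℝ) ≠ 0 := by positivity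
  have hP := (hasSum_two_mul_integral_mul_cos_succ hf.continuousOn hderiv hf' hk0).div_const
    (2 * k)
  simp only [mul_div_cancel_left₀ _ h2k] at hP
  refine ⟨_, tendsto_sum_Icc_one_of_hasSum hP, ?_⟩
  have hIco : Finset.Ico 1 k = Finset.Icc 1 (k - 1) := by
    rw [← Finset.Ico_add_one_right_eq_Icc, Nat.sub_add_cancel hk]
  rw [Finset.sum_range_eq_add_Ico _ (Nat.pos_of_ne_zero hk0), hIco, Nat.cast_zero, zero_div]
  field_simp
  ring
end
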